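/- Let (𝔤, 𝔥) be a Lie algebra pair and ∇ : 𝔤 → End(𝔤/𝔥) a linear map extending the natural 𝔥-action. The induced cochain 𝔥 → Hom(𝔤/𝔥, End(𝔤/𝔥)), a ↦ R^∇(a) with R^∇(a)(l̄) = [∇(a),∇(l)] − ∇([a,l]), is a Chevalley–Eilenberg 1-cocycle: for all a, b ∈ 𝔥, a·R^∇(b) − b·R^∇(a) − R^∇([a,b]) = 0, where 𝔥 acts on Hom(𝔤/𝔥, End(𝔤/𝔥)) by the natural tensor action (a·μ)(x̄) = [∇(a), μ(x̄)] − μ(a·x̄). -/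

import Mathlib

/-!
For an arbitrary linear `∇`, the Jacobi identities of `𝔤` and of `End(𝔤/𝔥)` reduce the coboundary
of `R^∇` at `(a, b)`, evaluated at `l̄`, to the commutator of the curvature
`[∇(a), ∇(b)] − ∇([a, b])` with `∇(l)`. When `∇` extends the `𝔥`-action on `𝔤/𝔥`, which is a
representation of `𝔥`, this curvature vanishes on `𝔥 × 𝔥`.
-/

/-- The Atiyah cochain of a linear map `D : 𝔤 → End(𝔤/𝔥)`, computed on representatives. -/
def atiyahR {k L Q : Type*} [Field k] [LieRing L] [LieAlgebra k L]
    [AddCommGroup Q] [Module k Q]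
    (D : L →ₗ[k] Module.End k Q) (c l : L) : Module.End k Q :=
  D c * D l - D l * D c - D ⁅c, l⁆

theorem atiyahR_coboundary_eq {k L Q : Type*} [Field k] [LieRing L] [LieAlgebra k L]
    [AddCommGroup Q] [Module k Q] (D : L →ₗ[k] Module.End k Q) (a b l : L) :
    ((D a * atiyahR D b l - atiyahR D b l * D a) - atiyahR D b ⁅a, l⁆)
      - ((D b * atiyahR D a l - atiyahR D a l * D b) - atiyahR D a ⁅b, l⁆)
      - atiyahR D ⁅a, b⁆ l = ⁅⁅D a, D b⁆ - D ⁅a, b⁆, D l⁆ := by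
  have hJacobi : D ⁅a, ⁅b, l⁆⁆ = D ⁅⁅a, b⁆, l⁆ + D ⁅b, ⁅a, l⁆⁆ := by
    rw [← map_add, lie_lie, sub_add_cancel]
  simp only [atiyahR, Ring.lie_def, hJacobi, mul_sub, sub_mul, mul_assoc]
  abel

theorem map_lie_of_mem_of_extends_quotient_action {k L : Type*} [Field k] [LieRing L]
    [LieAlgebra k L] {H : LieSubalgebra k L} {D : L →ₗ[k] Module.End k (L ⧸ H.toSubmodule)}
    (hext : ∀ a ∈ H, ∀ x : L, D a (H.toSubmodule.mkQ x) = H.toSubmodule.mkQ ⁅a, x⁆)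
    {a b : L} (ha : a ∈ H) (hb : b ∈ H) : D ⁅a, b⁆ = ⁅D a, D b⁆ := by
  refine LinearMap.ext fun q => ?_
  obtain ⟨x, rfl⟩ := H.toSubmodule.mkQ_surjective q
  simp only [Ring.lie_def, LinearMap.sub_apply, Module.End.mul_apply, hext a ha, hext b hb,
    hext ⁅a, b⁆ (H.lie_mem ha hb), ← map_sub, lie_lie]

/-- For `∇ : 𝔤 → End(𝔤/𝔥)` extending the natural `𝔥`-action, the Atiyah
cochain `a ↦ R^∇(a)` is a Chevalley–Eilenberg 1-cocycle: for all `a, b ∈ 𝔥`,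
`a·R^∇(b) − b·R^∇(a) − R^∇([a,b]) = 0`, where `(a·μ)(x̄) = [∇(a), μ(x̄)] − μ(a·x̄)`
(here written on representatives `l ∈ 𝔤`, with `a·l̄ = overline{[a,l]}`). -/
theorem stmt9 {k L : Type*} [Field k] [LieRing L] [LieAlgebra k L]
    (H : LieSubalgebra k L)
    (D : L →ₗ[k] Module.End k (L ⧸ H.toSubmodule))
    (hext : ∀ a ∈ H, ∀ x : L, D a (H.toSubmodule.mkQ x) = H.toSubmodule.mkQ ⁅a, x⁆) :
    ∀ a ∈ H, ∀ b ∈ H, ∀ l : L,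
      ((D a * atiyahR D b l - atiyahR D b l * D a) - atiyahR D b ⁅a, l⁆)
      - ((D b * atiyahR D a l - atiyahR D a l * D b) - atiyahR D a ⁅b, l⁆)
      - atiyahR D ⁅a, b⁆ l = 0 := by
  intro a ha b hb l
  rw [atiyahR_coboundary_eq, map_lie_of_mem_of_extends_quotient_action hext ha hb, sub_self,
    Ring.lie_def, zero_mul, mul_zero, sub_zero]
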